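/- arXiv:1304.0398 — 6 statements merged into one kernel-verified Lean document; each statement's English description precedes it below -/
import Mathlib

section
/- Let R be a nontrivial rotation of the plane about the origin, v* a unit vector, and p a point satisfying (R - I)p = λ v* for some real λ. Then p = C·v for some real C, where v = R_{π/2} R^{-1/2} v*, with R^{-1/2} the inverse of a square root of R and R_{π/2} the counterclockwise rotation by π/2. -/
/-- Rotation of the plane about the origin by angle θ, as a 2×2 matrix. -/
noncomputable def rotM (θ : ℝ) : Matrix (Fin 2) (Fin 2) ℝ :=
  !![Real.cos θ, -Real.sin θ; Real.sin θ, Real.cos θ]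

/-- Counterclockwise rotation of a vector by π/2. -/
def perp (x : Fin 2 → ℝ) : Fin 2 → ℝ := ![-(x 1), x 0]

def dot (a b : Fin 2 → ℝ) : ℝ := a 0 * b 0 + a 1 * b 1

/-- x is a unit vector. -/
def unitv (x : Fin 2 → ℝ) : Prop := x 0 ^ 2 + x 1 ^ 2 = 1

/-- If R = rotM θ is a nontrivial rotation, vstar a unit vector, and
(R - I) p = λ • vstar, then p = C • (R_{π/2} R^{-1/2} vstar), where
R^{1/2} = rotM φ is a square root of R and R^{-1/2} = rotM (-φ) its inverse. -/
theorem stmt0 (θ φ : ℝ) (hnt : rotM θ ≠ 1) (hsq : rotM φ * rotM φ = rotM θ)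
    (vstar : Fin 2 → ℝ) (hv : unitv vstar) (p : Fin 2 → ℝ) (lam : ℝ)
    (h : (rotM θ - 1).mulVec p = lam • vstar) :
    ∃ C : ℝ, p = C • (rotM (Real.pi / 2)).mulVec ((rotM (-φ)).mulVec vstar) := by
  have hpyth : Real.sin φ ^ 2 + Real.cos φ ^ 2 = 1 := Real.sin_sq_add_cos_sq φ
  -- entries of hsq
  have hC : Real.cos θ = Real.cos φ * Real.cos φ - Real.sin φ * Real.sin φ := by
    have := congrFun (congrFun hsq 0) 0
    simp [rotM, Matrix.mul_apply, Fin.sum_univ_two] at this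
    linarith
  have hS : Real.sin θ = 2 * Real.sin φ * Real.cos φ := by
    have := congrFun (congrFun hsq 1) 0
    simp [rotM, Matrix.mul_apply, Fin.sum_univ_two] at this
    linarith
  have hs : Real.sin φ ≠ 0 := by
    intro h0
    apply hnt
    have hc2 : Real.cos θ = 1 := by rw [hC, h0]; nlinarith
    have hs2 : Real.sin θ = 0 := by rw [hS, h0]; ring
    rw [rotM, hc2, hs2, Matrix.one_fin_two]
    norm_num
  have h0 := congrFun h 0
  have h1 := congrFun h 1
  simp [rotM, Matrix.mulVec, dotProduct, Fin.sum_univ_two, Matrix.sub_apply,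
    Matrix.one_apply] at h0 h1
  rw [hC, hS] at h0 h1
  refine ⟨-lam / (2 * Real.sin φ), ?_⟩
  funext i
  fin_cases i
  · simp [rotM, Matrix.mulVec, dotProduct, Fin.sum_univ_two, Real.cos_pi_div_two,
      Real.sin_pi_div_two, Real.cos_neg, Real.sin_neg]
    field_simp
    linear_combination (-Real.sin φ) * h0 + Real.cos φ * h1 -
      (Real.sin φ * p 0 + Real.cos φ * p 1) * hpyth
  · simp [rotM, Matrix.mulVec, dotProduct, Fin.sum_univ_two, Real.cos_pi_div_two,
      Real.sin_pi_div_two, Real.cos_neg, Real.sin_neg]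
    field_simp
    linear_combination (-Real.cos φ) * h0 - Real.sin φ * h1 +
      (Real.cos φ * p 0 - Real.sin φ * p 1) * hpyth
end

section
/- Let R be a rotation of the plane about the origin, v a unit vector, and v* = R^{1/2}·v^⊥. Then the scaling factor λ(v,w,R) = ⟨v, (v*)^⊥⟩ / ⟨w, (v*)^⊥⟩ vanishes for every choice of unit vectors v, w (with v*, w independent) if and only if R has order 2 (i.e., R is rotation by π). -/
/-- λ(v,w,R) = ⟨v,(v*)^⊥⟩/⟨w,(v*)^⊥⟩ vanishes for all unit v, w (with v*, w
independent) iff R is rotation by π, where v* = R^{1/2}·v^⊥ for the fixed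
square root R^{1/2} = rotM φ of R = rotM θ. -/
theorem stmt3 (θ φ : ℝ) (hsq : rotM φ * rotM φ = rotM θ) :
    (∀ v w : Fin 2 → ℝ, unitv v → unitv w →
        LinearIndependent ℝ ![(rotM φ).mulVec (perp v), w] →
        dot v (perp ((rotM φ).mulVec (perp v))) /
          dot w (perp ((rotM φ).mulVec (perp v))) = 0) ↔
      rotM θ = rotM Real.pi := by
  have pyth := Real.sin_sq_add_cos_sq φ
  have h00 : (rotM φ * rotM φ) 0 0 = rotM θ 0 0 := by rw [hsq]
  have h10 : (rotM φ * rotM φ) 1 0 = rotM θ 1 0 := by rw [hsq]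
  simp [rotM, Matrix.mul_apply, Fin.sum_univ_two] at h00 h10
  constructor
  · intro h
    have hv : unitv ![(1:ℝ), 0] := by simp [unitv]
    have hw : unitv ![-(Real.cos φ), -(Real.sin φ)] := by
      simp only [unitv, Matrix.cons_val_zero, Matrix.cons_val_one, Matrix.head_cons]
      nlinarith
    have hind : LinearIndependent ℝ
        ![(rotM φ).mulVec (perp ![(1:ℝ), 0]), ![-(Real.cos φ), -(Real.sin φ)]] := by
      rw [linearIndependent_fin2]
      constructor
      · intro hzero
        have h0 : -(Real.cos φ) = 0 := congrFun hzero 0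
        have h1 : -(Real.sin φ) = 0 := congrFun hzero 1
        nlinarith
      · intro a ha
        have h0 : a • (-(Real.cos φ)) = (rotM φ).mulVec (perp ![(1:ℝ), 0]) 0 :=
          congrFun ha 0
        have h1 : a • (-(Real.sin φ)) = (rotM φ).mulVec (perp ![(1:ℝ), 0]) 1 :=
          congrFun ha 1
        simp [rotM, perp, Matrix.mulVec, dotProduct, Fin.sum_univ_two,
          smul_eq_mul] at h0 h1
        exact absurd (by linear_combination -Real.sin φ * h0 - Real.cos φ * h1 - pyth :
          (1:ℝ) = 0) one_ne_zero
    have := h ![(1:ℝ), 0] ![-(Real.cos φ), -(Real.sin φ)] hv hw hind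
    simp [rotM, perp, dot, Matrix.mulVec, dotProduct, Fin.sum_univ_two] at this
    -- extract cos φ = 0
    have hcos : Real.cos φ = 0 := by
      rcases this with hc | habs
      · exact hc
      · nlinarith
    ext i j
    fin_cases i <;> fin_cases j <;>
      simp [rotM, Real.cos_pi, Real.sin_pi] <;> nlinarith
  · intro heq v w hv hw _
    have e00 : rotM θ 0 0 = rotM Real.pi 0 0 := by rw [heq]
    simp [rotM, Real.cos_pi] at e00
    have hcos : Real.cos φ = 0 := by nlinarith
    have hnum : dot v (perp ((rotM φ).mulVec (perp v))) = 0 := by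
      simp [rotM, perp, dot, Matrix.mulVec, dotProduct, Fin.sum_univ_two, hcos]
      ring
    rw [hnum, zero_div]
end

section
/- Let (G,γ) be a ℤ/2ℤ-colored reflection-Laman graph. Then every (2,2)-component of G contains at most one Ross-circuit; in particular, distinct Ross-circuits in (G,γ) are vertex disjoint. -/
section Preamble
variable {V E : Type}

/-- Vertices spanned by an edge set. -/
def verts [DecidableEq V] (src tgt : E → V) (S : Finset E) : Finset V :=
  S.image src ∪ S.image tgt

/-- Walks in a directed multigraph using edges of `S`, each edge traversed
forwards (`true`) or backwards (`false`). -/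
def IsWalk (src tgt : E → V) (S : Finset E) : V → V → List (E × Bool) → Prop
  | a, b, [] => a = b
  | a, b, (e, o) :: rest =>
      e ∈ S ∧ (if o = true then src e = a ∧ IsWalk src tgt S (tgt e) b rest
               else tgt e = a ∧ IsWalk src tgt S (src e) b rest)

/-- Signed sum of colors along a walk. -/
def wsum {k : ℕ} (col : E → ZMod k) (l : List (E × Bool)) : ZMod k :=
  (l.map fun s => if s.2 = true then col s.1 else - col s.1).sum

def Conn (src tgt : E → V) (S : Finset E) (a b : V) : Prop :=
  ∃ l, IsWalk src tgt S a b l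

def compOf [DecidableEq V] (src tgt : E → V) (S : Finset E) (v : V) : Set V :=
  {u | u ∈ verts src tgt S ∧ Conn src tgt S v u}

/-- Connected components of the subgraph spanned by S. -/
def comps [DecidableEq V] (src tgt : E → V) (S : Finset E) : Set (Set V) :=
  {C | ∃ v ∈ verts src tgt S, C = compOf src tgt S v}

/-- A component has trivial ρ-image: all closed walks in it have color sum 0. -/
def TrivComp {k : ℕ} (src tgt : E → V) (col : E → ZMod k) (S : Finset E) (C : Set V) : Prop :=
  ∀ v ∈ C, ∀ l, IsWalk src tgt S v v l → wsum col l = 0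

/-- number of connected components with trivial ρ-image -/
noncomputable def c0 [DecidableEq V] {k : ℕ} (src tgt : E → V) (col : E → ZMod k)
    (S : Finset E) : ℕ :=
  {C ∈ comps src tgt S | TrivComp src tgt col S C}.ncard

/-- number of connected components with nontrivial ρ-image -/
noncomputable def cN [DecidableEq V] {k : ℕ} (src tgt : E → V) (col : E → ZMod k)
    (S : Finset E) : ℕ :=
  {C ∈ comps src tgt S | ¬ TrivComp src tgt col S C}.ncard

/-- every subgraph satisfies m' ≤ 2n' − c' − 3c'₀ -/
def ConeLamanSparse [DecidableEq V] {k : ℕ} (src tgt : E → V) (col : E → ZMod k) : Prop :=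
  ∀ S : Finset E,
    S.card + cN src tgt col S + 3 * c0 src tgt col S ≤ 2 * (verts src tgt S).card

def ConeLaman [DecidableEq V] [Fintype V] [Fintype E] {k : ℕ}
    (src tgt : E → V) (col : E → ZMod k) : Prop :=
  Fintype.card E + 1 = 2 * Fintype.card V ∧ ConeLamanSparse src tgt col

def Cone22 [DecidableEq V] [Fintype V] [Fintype E] {k : ℕ}
    (src tgt : E → V) (col : E → ZMod k) : Prop :=
  Fintype.card E = 2 * Fintype.card V ∧
  ∀ S : Finset E, S.card + 2 * c0 src tgt col S ≤ 2 * (verts src tgt S).card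

def Refl22 [DecidableEq V] [Fintype V] [Fintype E] {k : ℕ}
    (src tgt : E → V) (col : E → ZMod k) : Prop :=
  Fintype.card E + 1 = 2 * Fintype.card V ∧
  ∀ S : Finset E,
    S.card + cN src tgt col S + 2 * c0 src tgt col S ≤ 2 * (verts src tgt S).card

def ReflLaman [DecidableEq V] [Fintype V] [Fintype E]
    (src tgt : E → V) (col : E → ZMod 2) : Prop :=
  Fintype.card E + 1 = 2 * Fintype.card V ∧ ConeLamanSparse src tgt col

/-- every subgraph of S satisfies m' ≤ 2n' − 2c' − 3c'₀ -/
def RossSparse [DecidableEq V] {k : ℕ} (src tgt : E → V) (col : E → ZMod k)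
    (S : Finset E) : Prop :=
  ∀ S' ⊆ S,
    S'.card + 2 * cN src tgt col S' + 3 * c0 src tgt col S' ≤ 2 * (verts src tgt S').card

/-- The subgraph S is a Ross graph: m = 2n − 2 and Ross-sparse. -/
def IsRossSub [DecidableEq V] {k : ℕ} (src tgt : E → V) (col : E → ZMod k)
    (S : Finset E) : Prop :=
  S.card + 2 = 2 * (verts src tgt S).card ∧ RossSparse src tgt col S

/-- Becomes a Ross graph after deleting any single edge. -/
def RossCircuit [DecidableEq V] [DecidableEq E] {k : ℕ} (src tgt : E → V)
    (col : E → ZMod k) (S : Finset E) : Prop :=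
  S.Nonempty ∧ ∀ e ∈ S, IsRossSub src tgt col (S.erase e)

/-- A (2,2)-block / (2,2)-graph: m = 2n−2, and (2,2)-sparse. -/
def Tight22 [DecidableEq V] (src tgt : E → V) (S : Finset E) : Prop :=
  S.card + 2 = 2 * (verts src tgt S).card ∧
  ∀ S' ⊆ S, S'.Nonempty → S'.card + 2 ≤ 2 * (verts src tgt S').card

def SpanningTree [DecidableEq V] [Fintype V] (src tgt : E → V) (T : Finset E) : Prop :=
  (∀ a b : V, Conn src tgt T a b) ∧ T.card + 1 = Fintype.card V

def Spanning [DecidableEq V] [Fintype V] (src tgt : E → V) (S : Finset E) : Prop :=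
  verts src tgt S = Finset.univ

/-- A map-graph (exactly one cycle per component, i.e. every component has as many
edges as vertices) all of whose components have nontrivial ρ-image. -/
def Map11 [DecidableEq V] {k : ℕ} (src tgt : E → V) (col : E → ZMod k) (S : Finset E) : Prop :=
  (∀ C ∈ comps src tgt S, ((S : Set E) ∩ {e | src e ∈ C}).ncard = C.ncard) ∧
  (∀ C ∈ comps src tgt S, ¬ TrivComp src tgt col S C)

end Preamble

/-- A (2,2)-component: a maximal edge set admitting a spanning (2,2)-tight subgraph. -/
def Comp22 {V E : Type} [DecidableEq V] (src tgt : E → V) (C : Finset E) : Prop :=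
  (∃ S ⊆ C, verts src tgt S = verts src tgt C ∧ Tight22 src tgt S) ∧
  ∀ C' : Finset E, C ⊆ C' →
    (∃ S ⊆ C', verts src tgt S = verts src tgt C' ∧ Tight22 src tgt S) → C' = C

section Helpers

variable {V E : Type} [DecidableEq V]

lemma mem_verts_iff {src tgt : E → V} {S : Finset E} {v : V} :
    v ∈ verts src tgt S ↔ ∃ e ∈ S, src e = v ∨ tgt e = v := by
  unfold verts
  constructor
  · intro hv
    rcases Finset.mem_union.1 hv with h | h
    · obtain ⟨e, he, hee⟩ := Finset.mem_image.1 h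
      exact ⟨e, he, Or.inl hee⟩
    · obtain ⟨e, he, hee⟩ := Finset.mem_image.1 h
      exact ⟨e, he, Or.inr hee⟩
  · rintro ⟨e, he, h | h⟩
    · exact Finset.mem_union_left _ (Finset.mem_image.2 ⟨e, he, h⟩)
    · exact Finset.mem_union_right _ (Finset.mem_image.2 ⟨e, he, h⟩)

lemma verts_mono {src tgt : E → V} {S T : Finset E} (h : S ⊆ T) :
    verts src tgt S ⊆ verts src tgt T := by
  intro v hv
  rw [mem_verts_iff] at hv ⊢
  obtain ⟨e, he, hor⟩ := hv
  exact ⟨e, h he, hor⟩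

lemma verts_union [DecidableEq E] {src tgt : E → V} {S T : Finset E} :
    verts src tgt (S ∪ T) = verts src tgt S ∪ verts src tgt T := by
  ext v
  simp only [mem_verts_iff, Finset.mem_union]
  constructor
  · rintro ⟨e, he | he, hor⟩
    · exact Or.inl ⟨e, he, hor⟩
    · exact Or.inr ⟨e, he, hor⟩
  · rintro (⟨e, he, hor⟩ | ⟨e, he, hor⟩)
    · exact ⟨e, Or.inl he, hor⟩
    · exact ⟨e, Or.inr he, hor⟩

lemma verts_nonempty {src tgt : E → V} {S : Finset E} (h : S.Nonempty) :
    (verts src tgt S).Nonempty := by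
  obtain ⟨e, he⟩ := h
  exact ⟨src e, mem_verts_iff.2 ⟨e, he, Or.inl rfl⟩⟩

/-- A nonempty edge set has at least one connected component. -/
lemma onecomp [Finite V] {k : ℕ} (src tgt : E → V) (col : E → ZMod k)
    (S : Finset E) (hS : S.Nonempty) :
    1 ≤ c0 src tgt col S + cN src tgt col S := by
  obtain ⟨v, hv⟩ := verts_nonempty (src := src) (tgt := tgt) hS
  have hmem : compOf src tgt S v ∈ comps src tgt S := ⟨v, hv, rfl⟩
  by_contra h
  push_neg at h
  interval_cases h0 : c0 src tgt col S + cN src tgt col S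
  have h1 : c0 src tgt col S = 0 := by omega
  have h2 : cN src tgt col S = 0 := by omega
  have e1 : {C ∈ comps src tgt S | TrivComp src tgt col S C} = ∅ :=
    (Set.ncard_eq_zero (Set.toFinite _)).1 h1
  have e2 : {C ∈ comps src tgt S | ¬ TrivComp src tgt col S C} = ∅ :=
    (Set.ncard_eq_zero (Set.toFinite _)).1 h2
  by_cases ht : TrivComp src tgt col S (compOf src tgt S v)
  · exact absurd e1 (Set.nonempty_iff_ne_empty.1 ⟨_, hmem, ht⟩)
  · exact absurd e2 (Set.nonempty_iff_ne_empty.1 ⟨_, hmem, ht⟩)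

variable [DecidableEq E] [Finite V]

/-- A Ross circuit satisfies m = 2n − 1. -/
lemma circuit_count {k : ℕ} {src tgt : E → V} {col : E → ZMod k} {S : Finset E}
    (hRC : RossCircuit src tgt col S) :
    S.card + 1 = 2 * (verts src tgt S).card := by
  obtain ⟨hne, h⟩ := hRC
  obtain ⟨e₀, he₀⟩ := hne
  have hpos : 1 ≤ S.card := Finset.card_pos.2 ⟨e₀, he₀⟩
  have hcount : ∀ e ∈ S, S.card + 1 = 2 * (verts src tgt (S.erase e)).card := by
    intro e he
    have h1 := (h e he).1
    rw [Finset.card_erase_of_mem he] at h1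
    omega
  -- m ≥ 2
  have hcard2 : 2 ≤ S.card := by
    by_contra hlt
    have hS1 : S.card = 1 := by omega
    have : S = {e₀} := Finset.eq_singleton_iff_unique_mem.2 ⟨he₀, by
      intro x hx
      by_contra hne'
      have := Finset.one_lt_card.2 ⟨x, hx, e₀, he₀, hne'⟩
      omega⟩
    have h2 := hcount e₀ he₀
    rw [this] at h2
    simp only [Finset.erase_singleton] at h2
    have : verts src tgt (∅ : Finset E) = ∅ := by
      ext v; simp [mem_verts_iff]
    rw [this] at h2
    simp at h2
  by_cases hex : ∃ e ∈ S, verts src tgt (S.erase e) = verts src tgt S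
  · obtain ⟨e, he, hve⟩ := hex
    rw [← hve]
    exact hcount e he
  · push_neg at hex
    exfalso
    -- every edge has a private leaf
    have hleaf : ∀ e : E, ∃ v : V, e ∈ S →
        v ∈ verts src tgt S ∧ v ∉ verts src tgt (S.erase e) := by
      intro e
      by_cases he : e ∈ S
      · have hsub : verts src tgt (S.erase e) ⊆ verts src tgt S :=
          verts_mono (Finset.erase_subset _ _)
        obtain ⟨v, hv1, hv2⟩ := Finset.exists_of_ssubset ⟨hsub, fun hc =>
          hex e he (Finset.Subset.antisymm hsub hc)⟩
        exact ⟨v, fun _ => ⟨hv1, hv2⟩⟩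
      · exact ⟨src e, fun hc => absurd hc he⟩
    choose f hf using hleaf
    -- leaf properties
    have hP1 : ∀ e ∈ S, ∀ e' ∈ S, e' ≠ e → src e' ≠ f e ∧ tgt e' ≠ f e := by
      intro e he e' he' hne' 
      have h2 := (hf e he).2
      constructor <;> intro hc <;> exact h2 (mem_verts_iff.2
        ⟨e', Finset.mem_erase.2 ⟨hne', he'⟩, by tauto⟩)
    have hP2 : ∀ e ∈ S, src e = f e ∨ tgt e = f e := by
      intro e he
      obtain ⟨e'', he'', hor⟩ := mem_verts_iff.1 (hf e he).1
      by_cases hee : e'' = e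
      · rwa [hee] at hor
      · exact absurd hor (by
          have := hP1 e he e'' he'' hee
          tauto)
    have hP3 : Set.InjOn f S := by
      intro e he e' he' hfe
      by_contra hne'
      have h1 := hP2 e (by exact_mod_cast he)
      have h2 := hP1 e' (by exact_mod_cast he') e (by exact_mod_cast he) hne'
      rw [hfe] at h1
      tauto
    have hP4 : ∀ e ∈ S, ∀ e' ∈ S.erase e, f e' ∈ verts src tgt (S.erase e) := by
      intro e he e' he'
      have he'S : e' ∈ S := Finset.mem_of_mem_erase he'
      exact mem_verts_iff.2 ⟨e', he', hP2 e' he'S⟩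
    -- card bound: m − 1 ≤ n'
    have hcb : (S.erase e₀).card ≤ (verts src tgt (S.erase e₀)).card := by
      apply Finset.card_le_card_of_injOn f (hP4 e₀ he₀)
      exact hP3.mono (fun x hx => Finset.mem_of_mem_erase hx)
    rw [Finset.card_erase_of_mem he₀] at hcb
    have hc0 := hcount e₀ he₀
    have hm3 : S.card = 3 := by omega
    -- pick e₂ in S.erase e₀, show it is a loop at f e₂
    have hce : (S.erase e₀).card = 2 := by
      rw [Finset.card_erase_of_mem he₀]; omega
    obtain ⟨e₂, he₂⟩ : (S.erase e₀).Nonempty := Finset.card_pos.1 (by omega)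
    have he₂S : e₂ ∈ S := Finset.mem_of_mem_erase he₂
    have himg : (S.erase e₀).image f = verts src tgt (S.erase e₀) := by
      apply Finset.eq_of_subset_of_card_le
      · intro v hv
        obtain ⟨e', he', rfl⟩ := Finset.mem_image.1 hv
        exact hP4 e₀ he₀ e' he'
      · rw [Finset.card_image_of_injOn (hP3.mono
          (fun x hx => Finset.mem_of_mem_erase hx))]
        have := hcount e₀ he₀
        omega
    have hloop : ∀ v ∈ verts src tgt (S.erase e₀), ∃ e₃ ∈ S.erase e₀, f e₃ = v := by
      intro v hv
      rw [← himg] at hv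
      obtain ⟨e₃, he₃, hfe₃⟩ := Finset.mem_image.1 hv
      exact ⟨e₃, he₃, hfe₃⟩
    have hsrc : src e₂ = f e₂ := by
      obtain ⟨e₃, he₃, hfe₃⟩ := hloop (src e₂)
        (mem_verts_iff.2 ⟨e₂, he₂, Or.inl rfl⟩)
      by_cases he23 : e₂ = e₃
      · rw [← he23] at hfe₃; exact hfe₃.symm
      · exact absurd hfe₃.symm
          (hP1 e₃ (Finset.mem_of_mem_erase he₃) e₂ he₂S he23).1
    have htgt : tgt e₂ = f e₂ := by
      obtain ⟨e₃, he₃, hfe₃⟩ := hloop (tgt e₂)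
        (mem_verts_iff.2 ⟨e₂, he₂, Or.inr rfl⟩)
      by_cases he23 : e₂ = e₃
      · rw [← he23] at hfe₃; exact hfe₃.symm
      · exact absurd hfe₃.symm
          (hP1 e₃ (Finset.mem_of_mem_erase he₃) e₂ he₂S he23).2
    -- {e₂} is a loop; violates Ross sparsity of S.erase e₀
    have hv2 : verts src tgt ({e₂} : Finset E) = {f e₂} := by
      ext v
      rw [mem_verts_iff, Finset.mem_singleton]
      constructor
      · rintro ⟨e, he, hor⟩
        rw [Finset.mem_singleton] at he
        subst he
        rcases hor with h | h
        · rw [← h, hsrc]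
        · rw [← h, htgt]
      · intro hvv
        exact ⟨e₂, Finset.mem_singleton_self _, Or.inl (hsrc.trans hvv.symm)⟩
    have hRS := (h e₀ he₀).2 {e₂} (Finset.singleton_subset_iff.2 he₂)
    rw [hv2] at hRS
    simp only [Finset.card_singleton] at hRS
    have h1c := onecomp src tgt col ({e₂} : Finset E) ⟨e₂, Finset.mem_singleton_self _⟩
    omega

/-- Proper nonempty subsets of a Ross circuit satisfy the (2,2)-count. -/
lemma circuit_sparse {k : ℕ} {src tgt : E → V} {col : E → ZMod k} {S : Finset E}
    (hRC : RossCircuit src tgt col S) {S' : Finset E} (hsub : S' ⊆ S) (hne : S' ≠ S)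
    (hne' : S'.Nonempty) :
    S'.card + 2 ≤ 2 * (verts src tgt S').card := by
  obtain ⟨e, heS, heS'⟩ := Finset.exists_of_ssubset (hsub.ssubset_of_ne hne)
  have hsub' : S' ⊆ S.erase e := fun x hx =>
    Finset.mem_erase.2 ⟨fun hc => heS' (hc ▸ hx), hsub hx⟩
  have := hRC.2 e heS |>.2 S' hsub'
  have h1c := onecomp src tgt col S' hne'
  omega

/-- No Ross circuit properly contains another. -/
lemma circuit_subset {k : ℕ} {src tgt : E → V} {col : E → ZMod k} {S₁ S₂ : Finset E}
    (h1 : RossCircuit src tgt col S₁) (h2 : RossCircuit src tgt col S₂)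
    (hsub : S₁ ⊆ S₂) : S₁ = S₂ := by
  by_contra hne
  have := circuit_sparse h2 hsub hne h1.1
  have := circuit_count h1
  omega

end Helpers

lemma circuits_disjoint {V E : Type} [Fintype V] [Fintype E] [DecidableEq V] [DecidableEq E]
    (src tgt : E → V) (col : E → ZMod 2) (hRL : ReflLaman src tgt col)
    (S₁ S₂ : Finset E) (h1 : RossCircuit src tgt col S₁) (h2 : RossCircuit src tgt col S₂)
    (hne : S₁ ≠ S₂) : Disjoint (verts src tgt S₁) (verts src tgt S₂) := by
  by_contra hdisj
  obtain ⟨v, hv1, hv2⟩ := Finset.not_disjoint_iff.1 hdisj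
  have hcU : (S₁ ∪ S₂).card + (S₁ ∩ S₂).card = S₁.card + S₂.card :=
    Finset.card_union_add_card_inter S₁ S₂
  have hnU : (verts src tgt (S₁ ∪ S₂)).card + (verts src tgt S₁ ∩ verts src tgt S₂).card
      = (verts src tgt S₁).card + (verts src tgt S₂).card := by
    rw [verts_union]; exact Finset.card_union_add_card_inter _ _
  have hm1 := circuit_count h1
  have hm2 := circuit_count h2
  have hCLS := hRL.2 (S₁ ∪ S₂)
  have h1c := onecomp src tgt col (S₁ ∪ S₂) (h1.1.mono Finset.subset_union_left)
  have hnIv : 1 ≤ (verts src tgt S₁ ∩ verts src tgt S₂).card :=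
    Finset.card_pos.2 ⟨v, Finset.mem_inter.2 ⟨hv1, hv2⟩⟩
  have hkey : (S₁ ∩ S₂).card = 0 ∨
      (S₁ ∩ S₂).card + 2 ≤ 2 * (verts src tgt S₁ ∩ verts src tgt S₂).card := by
    rcases Finset.eq_empty_or_nonempty (S₁ ∩ S₂) with hIe | hIne
    · left; rw [hIe]; rfl
    · right
      have hIne1 : S₁ ∩ S₂ ≠ S₁ := by
        intro hc
        exact hne (circuit_subset h1 h2 (by rw [← hc]; exact Finset.inter_subset_right))
      have hsp := circuit_sparse h1 Finset.inter_subset_left hIne1 hIne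
      have hvi : verts src tgt (S₁ ∩ S₂) ⊆ verts src tgt S₁ ∩ verts src tgt S₂ :=
        Finset.subset_inter (verts_mono Finset.inter_subset_left)
          (verts_mono Finset.inter_subset_right)
      have := Finset.card_le_card hvi
      omega
  omega

/-- In a reflection-Laman graph, every (2,2)-component contains at most one
Ross-circuit; in particular distinct Ross-circuits are vertex disjoint. -/
theorem stmt11 {V E : Type} [Fintype V] [Fintype E] [DecidableEq V] [DecidableEq E]
    (src tgt : E → V) (col : E → ZMod 2) (hRL : ReflLaman src tgt col) :
    (∀ C : Finset E, Comp22 src tgt C →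
      ∀ S₁ S₂ : Finset E, S₁ ⊆ C → S₂ ⊆ C →
        RossCircuit src tgt col S₁ → RossCircuit src tgt col S₂ → S₁ = S₂) ∧
    (∀ S₁ S₂ : Finset E, RossCircuit src tgt col S₁ → RossCircuit src tgt col S₂ →
      S₁ ≠ S₂ → Disjoint (verts src tgt S₁) (verts src tgt S₂)) := by
  constructor
  · rintro C ⟨⟨S, hSC, hSv, hT⟩, -⟩ S₁ S₂ hS₁C hS₂C h1 h2
    by_contra hne
    have hdisj := circuits_disjoint src tgt col hRL S₁ S₂ h1 h2 hne
    have hE : Disjoint S₁ S₂ := Finset.disjoint_left.2 fun e he1 he2 =>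
      Finset.disjoint_left.1 hdisj (mem_verts_iff.2 ⟨e, he1, Or.inl rfl⟩)
        (mem_verts_iff.2 ⟨e, he2, Or.inl rfl⟩)
    -- vertex set of the union is that of S
    have hv1 : verts src tgt S₁ ⊆ verts src tgt S := by
      rw [hSv]; exact verts_mono hS₁C
    have hv2 : verts src tgt S₂ ⊆ verts src tgt S := by
      rw [hSv]; exact verts_mono hS₂C
    have hvT : verts src tgt (S ∪ S₁ ∪ S₂) = verts src tgt S := by
      apply Finset.Subset.antisymm
      · rw [verts_union, verts_union]
        exact Finset.union_subset (Finset.union_subset Finset.Subset.rfl hv1) hv2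
      · exact verts_mono (Finset.subset_union_left.trans Finset.subset_union_left)
    -- edge counting
    have hA : (S ∪ S₁).card + (S ∩ S₁).card = S.card + S₁.card :=
      Finset.card_union_add_card_inter S S₁
    have hB : (S ∪ S₁ ∪ S₂).card + ((S ∪ S₁) ∩ S₂).card = (S ∪ S₁).card + S₂.card :=
      Finset.card_union_add_card_inter (S ∪ S₁) S₂
    have hAB : (S ∪ S₁) ∩ S₂ = S ∩ S₂ := by
      ext e
      simp only [Finset.mem_inter, Finset.mem_union]
      constructor
      · rintro ⟨h | h, h2'⟩
        · exact ⟨h, h2'⟩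
        · exact absurd h2' (Finset.disjoint_left.1 hE h)
      · rintro ⟨h, h2'⟩
        exact ⟨Or.inl h, h2'⟩
    rw [hAB] at hB
    -- intersection bounds from (2,2)-tightness of S
    have hb : ∀ S' : Finset E, RossCircuit src tgt col S' →
        (S ∩ S').card + 2 ≤ 2 * (verts src tgt S').card := by
      intro S' hS'
      rcases Finset.eq_empty_or_nonempty (S ∩ S') with hIe | hIne
      · rw [hIe]
        have := Finset.card_pos.2 (verts_nonempty (src := src) (tgt := tgt) hS'.1)
        simp only [Finset.card_empty]
        omega
      · have hsp := hT.2 (S ∩ S') Finset.inter_subset_left hIne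
        have := Finset.card_le_card
          (verts_mono (src := src) (tgt := tgt) (Finset.inter_subset_right (s₁ := S) (s₂ := S')))
        omega
    have hb1 := hb S₁ h1
    have hb2 := hb S₂ h2
    have hm1 := circuit_count h1
    have hm2 := circuit_count h2
    have hTS := hT.1
    have hCLS := hRL.2 (S ∪ S₁ ∪ S₂)
    rw [hvT] at hCLS
    have h1c := onecomp src tgt col (S ∪ S₁ ∪ S₂)
      (h1.1.mono (Finset.subset_union_right.trans Finset.subset_union_left))
    omega
  · exact circuits_disjoint src tgt col hRL
end

section
/- Let (G,γ) be a ℤ/2ℤ-colored graph decomposed as the edge-disjoint union of a spanning tree T all of whose edges are colored 0 and a spanning map-graph X each of whose components has nontrivial ρ-image. In the double cover (lift) G̃ determined by the coloring: (1) each edge of T lifts to two edges joining vertices with equal labels, so T lifts to two disjoint copies of itself and all vertices with label 0 lie in one connected component of the lift of T; and (2) each connected component of X lifts to a connected subgraph of G̃. -/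
/-- Source map of the ℤ/2ℤ lift (double cover). -/
def liftSrc {V E : Type} (src : E → V) : E × ZMod 2 → V × ZMod 2 :=
  fun ez => (src ez.1, ez.2)

/-- Target map of the ℤ/2ℤ lift: the edge (e,g) joins (src e, g) to (tgt e, g + γ_e). -/
def liftTgt {V E : Type} (tgt : E → V) (col : E → ZMod 2) : E × ZMod 2 → V × ZMod 2 :=
  fun ez => (tgt ez.1, ez.2 + col ez.1)

/-!
In the lift, a walk of `G` starting at `(a, g)` ends at label `g` plus its color sum. Edges of
`T` have color `0`, so lifted tree walks keep their label; this splits the lift of `T` into two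
copies, and the label-`0` copy is connected because `T` is. A component of `X` contains a
closed walk of color sum `1`, whose lift joins the two lifts of its base point; routing through
that point joins any two lifts of vertices of the component.
-/

section Walks

variable {V E : Type} {src tgt : E → V} {S : Finset E}

@[simp]
lemma isWalk_nil {a b : V} : IsWalk src tgt S a b [] ↔ a = b := Iff.rfl

@[simp]
lemma isWalk_cons_true {a b : V} {e : E} {l : List (E × Bool)} :
    IsWalk src tgt S a b ((e, true) :: l) ↔ e ∈ S ∧ src e = a ∧ IsWalk src tgt S (tgt e) b l := by
  simp [IsWalk]

@[simp]
lemma isWalk_cons_false {a b : V} {e : E} {l : List (E × Bool)} :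
    IsWalk src tgt S a b ((e, false) :: l) ↔ e ∈ S ∧ tgt e = a ∧ IsWalk src tgt S (src e) b l := by
  simp [IsWalk]

def walkReverse (l : List (E × Bool)) : List (E × Bool) :=
  l.reverse.map fun s => (s.1, !s.2)

lemma walkReverse_cons (s : E × Bool) (l : List (E × Bool)) :
    walkReverse (s :: l) = walkReverse l ++ [(s.1, !s.2)] := by
  simp [walkReverse]

lemma IsWalk.append {a b c : V} {l l' : List (E × Bool)} (h : IsWalk src tgt S a b l)
    (h' : IsWalk src tgt S b c l') : IsWalk src tgt S a c (l ++ l') := by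
  induction l generalizing a with
  | nil => simpa [isWalk_nil.1 h] using h'
  | cons s l ih =>
    obtain ⟨e, _ | _⟩ := s
    · obtain ⟨he, ha, hl⟩ := isWalk_cons_false.1 h
      exact isWalk_cons_false.2 ⟨he, ha, ih hl⟩
    · obtain ⟨he, ha, hl⟩ := isWalk_cons_true.1 h
      exact isWalk_cons_true.2 ⟨he, ha, ih hl⟩

lemma IsWalk.reverse {a b : V} {l : List (E × Bool)} (h : IsWalk src tgt S a b l) :
    IsWalk src tgt S b a (walkReverse l) := by
  induction l generalizing a with
  | nil => simp [walkReverse, isWalk_nil.1 h]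
  | cons s l ih =>
    obtain ⟨e, _ | _⟩ := s
    · obtain ⟨he, ha, hl⟩ := isWalk_cons_false.1 h
      simpa [walkReverse, he, ha] using (ih hl).append
        (isWalk_cons_true.2 ⟨he, rfl, isWalk_nil.2 ha⟩)
    · obtain ⟨he, ha, hl⟩ := isWalk_cons_true.1 h
      simpa [walkReverse, he, ha] using (ih hl).append
        (isWalk_cons_false.2 ⟨he, rfl, isWalk_nil.2 ha⟩)

lemma IsWalk.mem {a b : V} {l : List (E × Bool)} (h : IsWalk src tgt S a b l) :
    ∀ s ∈ l, s.1 ∈ S := by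
  induction l generalizing a with
  | nil => simp
  | cons s l ih =>
    obtain ⟨e, _ | _⟩ := s
    · obtain ⟨he, -, hl⟩ := isWalk_cons_false.1 h
      simpa [he] using ih hl
    · obtain ⟨he, -, hl⟩ := isWalk_cons_true.1 h
      simpa [he] using ih hl

lemma Conn.trans {a b c : V} (h : Conn src tgt S a b) (h' : Conn src tgt S b c) :
    Conn src tgt S a c := by
  obtain ⟨l, hl⟩ := h
  obtain ⟨l', hl'⟩ := h'
  exact ⟨l ++ l', hl.append hl'⟩

lemma Conn.symm {a b : V} (h : Conn src tgt S a b) : Conn src tgt S b a := by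
  obtain ⟨l, hl⟩ := h
  exact ⟨walkReverse l, hl.reverse⟩

end Walks

section ColorSums

variable {E : Type} {k : ℕ} (col : E → ZMod k)

@[simp]
lemma wsum_nil : wsum col [] = 0 := rfl

@[simp]
lemma wsum_cons (s : E × Bool) (l : List (E × Bool)) :
    wsum col (s :: l) = (if s.2 = true then col s.1 else -col s.1) + wsum col l := by
  simp [wsum]

lemma wsum_append (l l' : List (E × Bool)) : wsum col (l ++ l') = wsum col l + wsum col l' := by
  simp [wsum]

lemma wsum_walkReverse (l : List (E × Bool)) : wsum col (walkReverse l) = -wsum col l := by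
  induction l with
  | nil => simp [walkReverse]
  | cons s l ih =>
    rw [walkReverse_cons, wsum_append, ih]
    obtain ⟨e, _ | _⟩ := s <;> simp [add_comm]

lemma wsum_eq_zero_of_col_eq_zero {l : List (E × Bool)} (h : ∀ s ∈ l, col s.1 = 0) :
    wsum col l = 0 := by
  refine List.sum_eq_zero fun x hx => ?_
  obtain ⟨s, hs, rfl⟩ := List.mem_map.1 hx
  simp [h s hs]

end ColorSums

section Lift

variable {V E : Type} {src tgt : E → V} {col : E → ZMod 2} {S : Finset E}

lemma IsWalk.conn_lift {a b : V} {l : List (E × Bool)} (h : IsWalk src tgt S a b l)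
    (g : ZMod 2) :
    Conn (liftSrc src) (liftTgt tgt col) (S ×ˢ Finset.univ) (a, g) (b, g + wsum col l) := by
  induction l generalizing a g with
  | nil => exact ⟨[], by simp [isWalk_nil.1 h]⟩
  | cons s l ih =>
    obtain ⟨e, _ | _⟩ := s
    · obtain ⟨he, rfl, hl⟩ := isWalk_cons_false.1 h
      obtain ⟨l', hl'⟩ := ih hl (g - col e)
      have hsum : g - col e + wsum col l = g + wsum col ((e, false) :: l) := by
        simp only [wsum_cons, Bool.false_eq_true, ↓reduceIte]; abel
      refine ⟨((e, g - col e), false) :: l', isWalk_cons_false.2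
        ⟨by simp [he], by simp [liftTgt], hsum ▸ hl'⟩⟩
    · obtain ⟨he, rfl, hl⟩ := isWalk_cons_true.1 h
      obtain ⟨l', hl'⟩ := ih hl (g + col e)
      have hsum : g + col e + wsum col l = g + wsum col ((e, true) :: l) := by
        simp only [wsum_cons, ↓reduceIte]; abel
      refine ⟨((e, g), true) :: l', isWalk_cons_true.2
        ⟨by simp [he], rfl, hsum ▸ hl'⟩⟩

lemma IsWalk.snd_eq_of_col_eq_zero (hS : ∀ e ∈ S, col e = 0) {p q : V × ZMod 2}
    {l : List ((E × ZMod 2) × Bool)}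
    (h : IsWalk (liftSrc src) (liftTgt tgt col) (S ×ˢ Finset.univ) p q l) : p.2 = q.2 := by
  induction l generalizing p with
  | nil => rw [isWalk_nil.1 h]
  | cons s l ih =>
    obtain ⟨⟨e, z⟩, _ | _⟩ := s
    · obtain ⟨he, rfl, hl⟩ := isWalk_cons_false.1 h
      simpa [liftTgt, liftSrc, hS e (Finset.mem_product.1 he).1] using ih hl
    · obtain ⟨he, rfl, hl⟩ := isWalk_cons_true.1 h
      simpa [liftTgt, liftSrc, hS e (Finset.mem_product.1 he).1] using ih hl

lemma conn_lift_of_odd_loop {w : V} {l : List (E × Bool)} (hl : IsWalk src tgt S w w l)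
    (hodd : wsum col l = 1) (g h : ZMod 2) :
    Conn (liftSrc src) (liftTgt tgt col) (S ×ˢ Finset.univ) (w, g) (w, h) := by
  obtain rfl | rfl : h = g ∨ h = g + 1 := by revert g h; decide
  · exact ⟨[], rfl⟩
  · simpa [hodd] using hl.conn_lift (col := col) g

lemma conn_lift_of_conn_of_odd_loop {u w : V} {l : List (E × Bool)}
    (huw : Conn src tgt S u w) (hl : IsWalk src tgt S w w l) (hodd : wsum col l = 1)
    (g h : ZMod 2) :
    Conn (liftSrc src) (liftTgt tgt col) (S ×ˢ Finset.univ) (u, g) (w, h) := by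
  obtain ⟨p, hp⟩ := huw
  exact (hp.conn_lift g).trans (conn_lift_of_odd_loop hl hodd _ h)

end Lift

theorem stmt15_general {V E : Type} [Fintype V] [DecidableEq V]
    (src tgt : E → V) (col : E → ZMod 2) (T X : Finset E)
    (hT : SpanningTree src tgt T) (hT0 : ∀ e ∈ T, col e = 0)
    (hX : Map11 src tgt col X) :
    ((∀ e ∈ T, ∀ g : ZMod 2, liftTgt tgt col (e, g) = (tgt e, g)) ∧
      (∀ a b : V,
        Conn (liftSrc src) (liftTgt tgt col) (T ×ˢ Finset.univ) (a, 0) (b, 0)) ∧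
      (∀ a b : V,
        ¬ Conn (liftSrc src) (liftTgt tgt col) (T ×ˢ Finset.univ) (a, 0) (b, 1))) ∧
    (∀ C ∈ comps src tgt X, ∀ u ∈ C, ∀ v ∈ C, ∀ g h : ZMod 2,
      Conn (liftSrc src) (liftTgt tgt col) (X ×ˢ Finset.univ) (u, g) (v, h)) := by
  refine ⟨⟨fun e he g => by simp [liftTgt, hT0 e he], fun a b => ?_, fun a b ⟨l, hl⟩ => ?_⟩, ?_⟩
  · obtain ⟨l, hl⟩ := hT.1 a b
    simpa [wsum_eq_zero_of_col_eq_zero col fun s hs => hT0 _ (hl.mem s hs)] using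
      hl.conn_lift (col := col) 0
  · exact zero_ne_one (hl.snd_eq_of_col_eq_zero hT0)
  · rintro _ ⟨v₀, hv₀, rfl⟩ u ⟨-, hu⟩ v ⟨-, hv⟩ g h
    obtain ⟨w, ⟨-, hw⟩, l, hl, hodd⟩ : ∃ w ∈ compOf src tgt X v₀, ∃ l,
        IsWalk src tgt X w w l ∧ wsum col l ≠ 0 := by
      simpa [TrivComp] using hX.2 _ ⟨v₀, hv₀, rfl⟩
    have hodd : wsum col l = 1 := Fin.eq_one_of_ne_zero _ hodd
    exact (conn_lift_of_conn_of_odd_loop (hu.symm.trans hw) hl hodd g 0).trans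
      (conn_lift_of_conn_of_odd_loop (hv.symm.trans hw) hl hodd h 0).symm

/-- For a decomposition of (G,γ) into a spanning tree T colored 0 and a spanning
map-graph X with all components of nontrivial ρ-image: (1) T lifts to two
disjoint copies of itself, each edge joining vertices of equal label, and all
label-0 vertices lie in one component of the lift of T; (2) each connected
component of X lifts to a connected subgraph of the double cover. -/
theorem stmt15 {V E : Type} [Fintype V] [Fintype E] [DecidableEq V] [DecidableEq E]
    (src tgt : E → V) (col : E → ZMod 2) (T X : Finset E)
    (hdisj : Disjoint T X) (hunion : T ∪ X = Finset.univ)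
    (hT : SpanningTree src tgt T) (hT0 : ∀ e ∈ T, col e = 0)
    (hXsp : Spanning src tgt X) (hX : Map11 src tgt col X) :
    ((∀ e ∈ T, ∀ g : ZMod 2, liftTgt tgt col (e, g) = (tgt e, g)) ∧
      (∀ a b : V,
        Conn (liftSrc src) (liftTgt tgt col) (T ×ˢ Finset.univ) (a, 0) (b, 0)) ∧
      (∀ a b : V,
        ¬ Conn (liftSrc src) (liftTgt tgt col) (T ×ˢ Finset.univ) (a, 0) (b, 1))) ∧
    (∀ C ∈ comps src tgt X, ∀ u ∈ C, ∀ v ∈ C, ∀ g h : ZMod 2,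
      Conn (liftSrc src) (liftTgt tgt col) (X ×ˢ Finset.univ) (u, g) (v, h)) :=
  stmt15_general src tgt col T X hT hT0 hX
end

section
/- Let k ≥ 2, R_k the rotation of ℝ² by 2π/k, and (G,γ) a ℤ/kℤ-colored graph that decomposes into two spanning map-graphs X and Y, each of whose components has nontrivial ρ-image, with k = 2. If every edge of X is assigned direction v and every edge of Y is assigned direction w, with v, w linearly independent, then any solution p: V(G) → ℝ² of the system ⟨R₂^{γ_{ij}} p_j − p_i, d_{ij}^⊥⟩ = 0 for all edges ij (where d_{ij} is the assigned direction) satisfies p_i = 0 for all vertices i. -/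
/-- Action of R₂^g for g ∈ ℤ/2ℤ, where R₂ is rotation by π. -/
def rpow2 (g : ZMod 2) (x : Fin 2 → ℝ) : Fin 2 → ℝ := if g = 0 then x else -x

noncomputable def sgn2 (g : ZMod 2) : ℝ := if g = 0 then 1 else -1

lemma sgn2_add (a b : ZMod 2) : sgn2 (a + b) = sgn2 a * sgn2 b := by
  have h01 : ∀ x : ZMod 2, x = 0 ∨ x = 1 := by decide
  obtain rfl | rfl := h01 a <;> obtain rfl | rfl := h01 b <;>
    simp [sgn2, show (1 + 1 : ZMod 2) = 0 by decide]

lemma sgn2_neg (a : ZMod 2) : sgn2 (-a) = sgn2 a := by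
  simp only [sgn2, neg_eq_zero]

lemma sgn2_mul_self (a : ZMod 2) : sgn2 a * sgn2 a = 1 := by
  unfold sgn2; split_ifs <;> norm_num

lemma sgn2_of_ne_zero {a : ZMod 2} (h : a ≠ 0) : sgn2 a = -1 := if_neg h

lemma dot_rpow2_sub (g : ZMod 2) (x y z : Fin 2 → ℝ) :
    dot (rpow2 g x - y) z = sgn2 g * dot x z - dot y z := by
  unfold rpow2 sgn2 dot; split_ifs <;> simp <;> ring

lemma eq_zero_of_dot_perp_eq_zero {v w x : Fin 2 → ℝ} (hind : LinearIndependent ℝ ![v, w])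
    (hv : dot x (perp v) = 0) (hw : dot x (perp w) = 0) : x = 0 := by
  -- both hypotheses say that the matrix with rows v, w annihilates perp x
  set A : Matrix (Fin 2) (Fin 2) ℝ := Matrix.of ![v, w]
  have hdet : A.det ≠ 0 :=
    ((Matrix.isUnit_iff_isUnit_det A).mp (Matrix.linearIndependent_rows_iff_isUnit.mp hind)).ne_zero
  have hperp : A.mulVec (perp x) = 0 := by
    simp only [dot, perp, Matrix.cons_val_zero, Matrix.cons_val_one] at hv hw
    ext i; fin_cases i <;> simp [A, Matrix.mulVec, dotProduct, Fin.sum_univ_two, perp] <;> linarith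
  have h := Matrix.eq_zero_of_mulVec_eq_zero hdet hperp
  have h0 : -x 1 = 0 := congrFun h 0
  have h1 : x 0 = 0 := congrFun h 1
  ext i; fin_cases i <;> simp_all

section Transport

variable {V E : Type} (src tgt : E → V) (col : E → ZMod 2) (S : Finset E) (q : V → ℝ)

lemma eq_sgn2_wsum_mul_of_isWalk (hq : ∀ e ∈ S, q (src e) = sgn2 (col e) * q (tgt e)) :
    ∀ (l : List (E × Bool)) (a b : V), IsWalk src tgt S a b l → q a = sgn2 (wsum col l) * q b
  | [], a, b, hab => by
    rw [show a = b from hab]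
    simp [wsum, sgn2]
  | (e, true) :: rest, a, b, ⟨he, hsrc, hrest⟩ => by
    rw [show wsum col ((e, true) :: rest) = col e + wsum col rest by simp [wsum], sgn2_add,
      ← hsrc, hq e he, eq_sgn2_wsum_mul_of_isWalk hq rest _ b hrest, mul_assoc]
  | (e, false) :: rest, a, b, ⟨he, htgt, hrest⟩ => by
    have hq' : q (tgt e) = sgn2 (col e) * q (src e) := by
      rw [hq e he, ← mul_assoc, sgn2_mul_self, one_mul]
    rw [show wsum col ((e, false) :: rest) = -col e + wsum col rest by simp [wsum], sgn2_add,
      sgn2_neg, ← htgt, hq', eq_sgn2_wsum_mul_of_isWalk hq rest _ b hrest, mul_assoc]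

lemma eq_zero_of_forall_not_trivComp [Fintype V] [DecidableEq V] (hsp : Spanning src tgt S)
    (hnt : ∀ C ∈ comps src tgt S, ¬ TrivComp src tgt col S C)
    (hq : ∀ e ∈ S, q (src e) = sgn2 (col e) * q (tgt e)) (i : V) : q i = 0 := by
  have hi : i ∈ verts src tgt S := hsp ▸ Finset.mem_univ i
  obtain ⟨u, ⟨-, l', hiu⟩, l, hcycle, hodd⟩ :
      ∃ u ∈ compOf src tgt S i, ∃ l, IsWalk src tgt S u u l ∧ wsum col l ≠ 0 := by
    simpa [TrivComp] using hnt _ ⟨i, hi, rfl⟩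
  have hu : q u = 0 := by
    have := eq_sgn2_wsum_mul_of_isWalk src tgt col S q hq l u u hcycle
    rw [sgn2_of_ne_zero hodd] at this
    linarith
  rw [eq_sgn2_wsum_mul_of_isWalk src tgt col S q hq l' i u hiu, hu, mul_zero]

end Transport

lemma dot_perp_eq_zero_of_solution {V E : Type} [Fintype V] [DecidableEq V] (src tgt : E → V)
    (col : E → ZMod 2) (S : Finset E) (hsp : Spanning src tgt S)
    (hnt : ∀ C ∈ comps src tgt S, ¬ TrivComp src tgt col S C) (u : Fin 2 → ℝ) (p : V → Fin 2 → ℝ)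
    (hsol : ∀ e ∈ S, dot (rpow2 (col e) (p (tgt e)) - p (src e)) (perp u) = 0) (i : V) :
    dot (p i) (perp u) = 0 := by
  refine eq_zero_of_forall_not_trivComp src tgt col S (fun j => dot (p j) (perp u)) hsp hnt
    (fun e he => ?_) i
  have := hsol e he
  rw [dot_rpow2_sub] at this
  linarith

theorem stmt17_general {V E : Type} [Fintype V] [DecidableEq V]
    (src tgt : E → V) (col : E → ZMod 2)
    (X Y : Finset E)
    (hXsp : Spanning src tgt X) (hX : Map11 src tgt col X)
    (hYsp : Spanning src tgt Y) (hY : Map11 src tgt col Y)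
    (v w : Fin 2 → ℝ) (hind : LinearIndependent ℝ ![v, w])
    (d : E → Fin 2 → ℝ) (hdX : ∀ e ∈ X, d e = v) (hdY : ∀ e ∈ Y, d e = w)
    (p : V → Fin 2 → ℝ)
    (hsol : ∀ e : E, dot (rpow2 (col e) (p (tgt e)) - p (src e)) (perp (d e)) = 0) :
    ∀ i : V, p i = 0 := by
  intro i
  have hv := dot_perp_eq_zero_of_solution src tgt col X hXsp hX.2 v p
    (fun e he => hdX e he ▸ hsol e) i
  have hw := dot_perp_eq_zero_of_solution src tgt col Y hYsp hY.2 w p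
    (fun e he => hdY e he ▸ hsol e) i
  exact eq_zero_of_dot_perp_eq_zero hind hv hw

/-- For k = 2: if a cone-(2,2) graph is decomposed into two spanning map-graphs
X and Y with every component of nontrivial ρ-image, every edge of X gets
direction v and every edge of Y direction w, with v, w linearly independent,
then every solution of the colored direction-network system is identically 0. -/
theorem stmt17 {V E : Type} [Fintype V] [Fintype E] [DecidableEq V] [DecidableEq E]
    (src tgt : E → V) (col : E → ZMod 2)
    (X Y : Finset E) (hdisj : Disjoint X Y) (hunion : X ∪ Y = Finset.univ)
    (hXsp : Spanning src tgt X) (hX : Map11 src tgt col X)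
    (hYsp : Spanning src tgt Y) (hY : Map11 src tgt col Y)
    (v w : Fin 2 → ℝ) (hind : LinearIndependent ℝ ![v, w])
    (d : E → Fin 2 → ℝ) (hdX : ∀ e ∈ X, d e = v) (hdY : ∀ e ∈ Y, d e = w)
    (p : V → Fin 2 → ℝ)
    (hsol : ∀ e : E, dot (rpow2 (col e) (p (tgt e)) - p (src e)) (perp (d e)) = 0) :
    ∀ i : V, p i = 0 :=
  stmt17_general src tgt col X Y hXsp hX hYsp hY v w hind d hdX hdY p hsol
end

section
/- Let (G,γ) be a ℤ/kℤ-colored graph, p: V(G) → ℝ² a point assignment with R_k^{γ_{ij}} p_j − p_i = α_{ij} d_{ij} for nonzero scalars α_{ij} and nonzero directions d_{ij} (a faithful realization of the direction network). Then the solution space of the infinitesimal rigidity system ⟨R_k^{γ_{ij}} v_j − v_i, R_k^{γ_{ij}} p_j − p_i⟩ = 0 (unknowns v: V(G) → ℝ²) is linearly isomorphic, via v ↦ (R_{π/2} v_i)_i, to the solution space of the direction-network system ⟨R_k^{γ_{ij}} q_j − q_i, d_{ij}^⊥⟩ = 0; in particular the two linear systems have equal rank. -/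
lemma rotM_mul (a b : ℝ) : rotM a * rotM b = rotM (a + b) := by
  ext i j
  fin_cases i <;> fin_cases j <;>
    simp [rotM, Matrix.mul_apply, Fin.sum_univ_two, Real.cos_add, Real.sin_add] <;> ring

lemma rotM_zero : rotM 0 = 1 := by
  ext i j
  fin_cases i <;> fin_cases j <;> simp [rotM]

lemma rotM_comm (a b : ℝ) : Commute (rotM a) (rotM b) := by
  unfold Commute SemiconjBy
  rw [rotM_mul, rotM_mul, add_comm]

lemma rotM_pi_div_two_mulVec (x : Fin 2 → ℝ) :
    (rotM (Real.pi / 2)).mulVec x = perp x := by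
  funext i
  fin_cases i <;>
    simp [rotM, Matrix.mulVec, dotProduct, Fin.sum_univ_two, perp]

lemma dot_perp_perp (a b : Fin 2 → ℝ) : dot (perp a) (perp b) = dot a b := by
  simp [dot, perp]; ring

lemma dot_smul_right (a x : Fin 2 → ℝ) (c : ℝ) : dot a (c • x) = c * dot a x := by
  simp [dot]; ring

/-- If p is a faithful realization of the colored direction network
(R_k^{γ_e} p_{tgt e} − p_{src e} = α_e • d_e with α_e ≠ 0, d_e ≠ 0), then
v ↦ R_{π/2} ∘ v maps the solution space of the infinitesimal rigidity system
bijectively onto the solution space of the direction-network system for d^⊥;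
in particular the two linear systems have equal rank. -/
theorem stmt18 {V E : Type} [Fintype V] [Fintype E] (k : ℕ) [NeZero k]
    (src tgt : E → V) (col : E → ZMod k)
    (p : V → Fin 2 → ℝ) (d : E → Fin 2 → ℝ) (α : E → ℝ)
    (hα : ∀ e, α e ≠ 0) (hd : ∀ e, d e ≠ 0)
    (hp : ∀ e : E,
      (rotM (2 * Real.pi / k) ^ (col e).val).mulVec (p (tgt e)) - p (src e)
        = α e • d e) :
    (∀ v : V → Fin 2 → ℝ,
      (∀ e : E,
        dot ((rotM (2 * Real.pi / k) ^ (col e).val).mulVec (v (tgt e)) - v (src e))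
            ((rotM (2 * Real.pi / k) ^ (col e).val).mulVec (p (tgt e)) - p (src e)) = 0)
      ↔
      (∀ e : E,
        dot ((rotM (2 * Real.pi / k) ^ (col e).val).mulVec
              ((rotM (Real.pi / 2)).mulVec (v (tgt e)))
            - (rotM (Real.pi / 2)).mulVec (v (src e)))
            (perp (d e)) = 0)) ∧
    (fun (v : V → Fin 2 → ℝ) i => (rotM (Real.pi / 2)).mulVec (v i)) ''
        {v | ∀ e : E,
          dot ((rotM (2 * Real.pi / k) ^ (col e).val).mulVec (v (tgt e)) - v (src e))
              ((rotM (2 * Real.pi / k) ^ (col e).val).mulVec (p (tgt e)) - p (src e)) = 0}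
      = {q | ∀ e : E,
          dot ((rotM (2 * Real.pi / k) ^ (col e).val).mulVec (q (tgt e)) - q (src e))
              (perp (d e)) = 0} := by
  set P := rotM (Real.pi / 2) with hP
  set R : E → Matrix (Fin 2) (Fin 2) ℝ :=
    fun e => rotM (2 * Real.pi / k) ^ (col e).val with hR
  have hcomm : ∀ e, R e * P = P * R e := fun e =>
    ((rotM_comm (Real.pi / 2) (2 * Real.pi / k)).pow_right _).symm
  have key : ∀ e (x y : Fin 2 → ℝ),
      dot ((R e).mulVec (P.mulVec x) - P.mulVec y) (perp (d e))
        = dot ((R e).mulVec x - y) (d e) := by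
    intro e x y
    have h1 : (R e).mulVec (P.mulVec x) - P.mulVec y
        = P.mulVec ((R e).mulVec x - y) := by
      rw [Matrix.mulVec_sub, Matrix.mulVec_mulVec, Matrix.mulVec_mulVec, hcomm]
    rw [h1, rotM_pi_div_two_mulVec, dot_perp_perp]
  have edge_iff : ∀ (v : V → Fin 2 → ℝ) (e : E),
      dot ((R e).mulVec (v (tgt e)) - v (src e))
          ((R e).mulVec (p (tgt e)) - p (src e)) = 0
        ↔ dot ((R e).mulVec (P.mulVec (v (tgt e))) - P.mulVec (v (src e)))
            (perp (d e)) = 0 := by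
    intro v e
    rw [key, hp e, dot_smul_right, mul_eq_zero]
    constructor
    · rintro (h | h)
      · exact absurd h (hα e)
      · exact h
    · exact Or.inr
  constructor
  · intro v
    exact forall_congr' (edge_iff v)
  · ext q
    constructor
    · rintro ⟨v, hv, rfl⟩ e
      exact (edge_iff v e).mp (hv e)
    · intro hq
      have hPQ : ∀ i, P.mulVec ((rotM (-(Real.pi / 2))).mulVec (q i)) = q i := by
        intro i
        rw [Matrix.mulVec_mulVec, hP, rotM_mul]
        simp [rotM_zero]
      refine ⟨fun i => (rotM (-(Real.pi / 2))).mulVec (q i), ?_, ?_⟩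
      · intro e
        refine (edge_iff (fun i => (rotM (-(Real.pi / 2))).mulVec (q i)) e).mpr ?_
        rw [hPQ, hPQ]
        exact hq e
      · funext i
        exact hPQ i
end
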